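/- Let I_n be the set of involutions of size n and let fp_n = Σ_{π ∈ I_n} #{i : π(i) = i} be the total number of fixed points over all involutions of size n. Then fp_n/(√n · |I_n|) → 1 as n → ∞. -/

import Mathlib

/-- `ConsecOcc p π i`: the word `π(i) π(i+1) … π(i+r-1)` (positions `0`-indexed)
is order-isomorphic to the pattern word `p 0, …, p (r-1)`. -/
def ConsecOcc {n r : ℕ} (p : Fin r → ℕ) (π : Equiv.Perm (Fin n)) (i : ℕ) : Prop :=
  ∃ h : i + r ≤ n, ∀ j k : Fin r,
    (π ⟨i + j.val, by have := j.isLt; omega⟩ < π ⟨i + k.val, by have := k.isLt; omega⟩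
      ↔ p j < p k)

/-- The number of consecutive occurrences of the pattern `p` in `π`. -/
noncomputable def occCount {n r : ℕ} (p : Fin r → ℕ) (π : Equiv.Perm (Fin n)) : ℕ :=
  Nat.card {i : ℕ // ConsecOcc p π i}

/-- `π` has no consecutive occurrence of any pattern in `ps`. -/
def AvoidsAll {n r : ℕ} (ps : List (Fin r → ℕ)) (π : Equiv.Perm (Fin n)) : Prop :=
  ∀ p ∈ ps, ∀ i, ¬ ConsecOcc p π i

-- Total number of consecutive occurrences of `p` over all size-`n` permutations satisfying `P`.
open scoped Classical in
noncomputable def totOcc {n r : ℕ} (p : Fin r → ℕ) (P : Equiv.Perm (Fin n) → Prop) : ℕ :=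
  ∑ π : Equiv.Perm (Fin n), if P π then occCount p π else 0

/-- The number of size-`n` permutations satisfying `P`. -/
noncomputable def classCard (n : ℕ) (P : Equiv.Perm (Fin n) → Prop) : ℕ :=
  Nat.card {π : Equiv.Perm (Fin n) // P π}

def p123 : Fin 3 → ℕ := ![1,2,3]
def p132 : Fin 3 → ℕ := ![1,3,2]
def p213 : Fin 3 → ℕ := ![2,1,3]
def p231 : Fin 3 → ℕ := ![2,3,1]
def p312 : Fin 3 → ℕ := ![3,1,2]
def p321 : Fin 3 → ℕ := ![3,2,1]

/-- The number of involutions of `{1,…,n}`. -/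
noncomputable def involCard (n : ℕ) : ℕ :=
  Nat.card {π : Equiv.Perm (Fin n) // π * π = 1}

-- Total number of fixed points over all involutions of size `n`.
open scoped Classical in
noncomputable def fpTotal (n : ℕ) : ℕ :=
  ∑ π : Equiv.Perm (Fin n),
    if π * π = 1 then (Finset.univ.filter (fun i => π i = i)).card else 0

/-! Deleting a fixed point of an involution of size `n + 1` leaves an involution of size `n`, so
`fp (n + 1) = (n + 1) I n` and the ratio in question is `√(n + 1) I n / I (n + 1)`. Sorting the
involutions of size `n + 2` by the image of one point gives `I (n + 2) = I (n + 1) + (n + 1) I n`,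
from which induction yields `√(n + 1) ≤ I (n + 1) / I n ≤ √(n + 1) + 1`. The ratio is therefore
squeezed between `1 - 1 / (√(n + 1) + 1)` and `1`. -/

open Equiv Equiv.Perm Finset Filter Topology

theorem card_involutions_congr {G H : Type*} [Monoid G] [Monoid H] (e : G ≃* H) :
    Nat.card {g : G // g * g = 1} = Nat.card {h : H // h * h = 1} :=
  Nat.card_congr (e.toEquiv.subtypeEquiv fun g => by simp [← map_mul])

theorem card_involutions_perm (α : Type*) [Finite α] :
    Nat.card {π : Perm α // π * π = 1} = involCard (Nat.card α) :=
  card_involutions_congr (Finite.equivFin α).permCongrHom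

theorem Nat.card_subtype_eq_sum_card_fiberwise {X Y : Type*} [Finite X] [Fintype Y]
    (P : X → Prop) (f : X → Y) :
    Nat.card {x // P x} = ∑ y, Nat.card {x // P x ∧ f x = y} := by
  rw [← Nat.card_congr (sigmaFiberEquiv fun x : {x // P x} => f x), Nat.card_sigma]
  exact sum_congr rfl fun y _ => Nat.card_congr (subtypeSubtypeEquivSubtypeInter P (f · = y))

section Involutions

variable {α : Type*} [DecidableEq α]

theorem commute_swap_of_swap_apply_eq {f : Perm α} {a b : α} (h : swap (f a) (f b) = swap a b) :
    Commute f (swap a b) := by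
  rw [Commute, SemiconjBy, mul_swap_eq_swap_mul, h]

theorem swap_mul_mul_swap_mul {f : Perm α} {a b : α} (h : Commute f (swap a b)) :
    swap a b * f * (swap a b * f) = f * f := by
  rw [mul_assoc, ← mul_assoc f, h.eq, mul_assoc, swap_mul_self_mul]

theorem involution_apply_eq_iff_swap_mul {π : Perm α} {a b : α} :
    π * π = 1 ∧ π a = b ↔
      (∀ x ∈ ({a, b} : Finset α), (swap a b * π) x = x) ∧ swap a b * π * (swap a b * π) = 1 := by
  constructor
  · rintro ⟨hinv, hab⟩
    have hba : π b = a := by rw [← hab, ← mul_apply, hinv, one_apply]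
    refine ⟨by simp [hab, hba], ?_⟩
    rw [swap_mul_mul_swap_mul (commute_swap_of_swap_apply_eq (by rw [hab, hba, swap_comm])), hinv]
  · rintro ⟨hfix, hinv⟩
    set σ := swap a b * π
    have hπ : π = swap a b * σ := by simp [σ, swap_mul_self_mul]
    have ha : σ a = a := hfix a (by simp)
    have hb : σ b = b := hfix b (by simp)
    have hσ : Commute σ (swap a b) := commute_swap_of_swap_apply_eq (by rw [ha, hb])
    rw [hπ, swap_mul_mul_swap_mul hσ, hinv, mul_apply, ha, swap_apply_left]
    exact ⟨rfl, rfl⟩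

variable [Fintype α]

theorem card_involutions_fixing (s : Finset α) :
    Nat.card {π : Perm α // (∀ x ∈ s, π x = x) ∧ π * π = 1} =
      involCard (Fintype.card α - #s) := by
  have e : {σ : Perm {x // x ∉ s} // σ * σ = 1} ≃
      {π : Perm α // (∀ x ∈ s, π x = x) ∧ π * π = 1} :=
    ((Perm.subtypeEquivSubtypePerm (· ∉ s)).subtypeEquiv
      (q := fun π => π.1 * π.1 = 1) fun σ => by
        simp [← map_mul, map_eq_one_iff _ ofSubtype_injective]).trans
    ((subtypeSubtypeEquivSubtypeInter _ (fun π : Perm α => π * π = 1)).trans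
      (subtypeEquivRight fun π => by simp))
  rw [← Nat.card_congr e, card_involutions_perm]
  simp

theorem card_involutions_apply_self (a : α) :
    Nat.card {π : Perm α // π * π = 1 ∧ π a = a} = involCard (Fintype.card α - 1) := by
  rw [← card_singleton a, ← card_involutions_fixing]
  exact Nat.card_congr (subtypeEquivRight fun π => by simp [and_comm])

theorem card_involutions_apply_of_ne {a b : α} (hab : a ≠ b) :
    Nat.card {π : Perm α // π * π = 1 ∧ π a = b} = involCard (Fintype.card α - 2) := by
  rw [← card_pair hab, ← card_involutions_fixing]
  exact Nat.card_congr
    ((Equiv.mulLeft (swap a b)).subtypeEquiv fun π => involution_apply_eq_iff_swap_mul)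

end Involutions

theorem involCard_zero : involCard 0 = 1 := by
  rw [involCard, Nat.card_eq_fintype_card]; decide

theorem involCard_one : involCard 1 = 1 := by
  rw [involCard, Nat.card_eq_fintype_card]; decide

theorem involCard_pos (n : ℕ) : 0 < involCard n :=
  have : Nonempty {π : Perm (Fin n) // π * π = 1} := ⟨⟨1, one_mul 1⟩⟩
  Nat.card_pos

theorem involCard_add_two (n : ℕ) :
    involCard (n + 2) = involCard (n + 1) + (n + 1) * involCard n := by
  rw [involCard, Nat.card_subtype_eq_sum_card_fiberwise _ fun π : Perm (Fin (n + 2)) => π 0,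
    Fin.sum_univ_succ, card_involutions_apply_self]
  simp only [card_involutions_apply_of_ne (Fin.succ_ne_zero _).symm]
  simp

theorem fpTotal_eq_sum_card (n : ℕ) :
    fpTotal n = ∑ i : Fin n, Nat.card {π : Perm (Fin n) // π * π = 1 ∧ π i = i} := by
  classical
  unfold fpTotal
  calc ∑ π : Perm (Fin n), (if π * π = 1 then #{i | π i = i} else 0)
      = ∑ π : Perm (Fin n), ∑ i, if π * π = 1 ∧ π i = i then 1 else 0 :=
        sum_congr rfl fun π _ => by split_ifs <;> simp [*]
    _ = ∑ i, ∑ π : Perm (Fin n), if π * π = 1 ∧ π i = i then 1 else 0 := sum_comm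
    _ = _ := sum_congr rfl fun i _ => by
        rw [← card_filter, Nat.card_eq_fintype_card, Fintype.card_subtype]

theorem fpTotal_succ (n : ℕ) : fpTotal (n + 1) = (n + 1) * involCard n := by
  simp only [fpTotal_eq_sum_card, card_involutions_apply_self]
  simp

theorem involCard_succ_bounds (n : ℕ) :
    √(n + 1) * involCard n ≤ involCard (n + 1) ∧
      (involCard (n + 1) : ℝ) ≤ (√(n + 1) + 1) * involCard n := by
  induction n with
  | zero => norm_num [involCard_zero, involCard_one]
  | succ n ih =>
    obtain ⟨hlow, hupp⟩ := ih
    set s := √((n : ℝ) + 1)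
    set t := √((n + 1 : ℕ) + 1 : ℝ)
    have hs : 0 ≤ s := Real.sqrt_nonneg _
    have hs2 : s ^ 2 = n + 1 := Real.sq_sqrt (by positivity)
    have ht2 : t ^ 2 = s ^ 2 + 1 := by rw [Real.sq_sqrt (by positivity), hs2]; push_cast; ring
    have ht1 : 1 ≤ t := Real.one_le_sqrt.2 (by push_cast; linarith)
    have hst : s ≤ t := Real.sqrt_le_sqrt (by push_cast; linarith)
    have hrec : (involCard (n + 2) : ℝ) = involCard (n + 1) + s ^ 2 * involCard n := by
      rw [involCard_add_two, hs2]; push_cast; ring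
    have hI : (0 : ℝ) ≤ involCard n := Nat.cast_nonneg _
    rw [hrec]
    constructor
    · -- from `t ^ 2 * (s + 1) ^ 2 = (s ^ 2 + s + 1) ^ 2 - s ^ 2`
      have key : (t - 1) * (s + 1) ≤ s ^ 2 := by nlinarith
      nlinarith [mul_le_mul_of_nonneg_left hupp (sub_nonneg.2 ht1),
        mul_le_mul_of_nonneg_right key hI]
    · nlinarith [mul_le_mul_of_nonneg_left hlow hs]

theorem fpTotal_succ_div (n : ℕ) :
    (fpTotal (n + 1) : ℝ) / (√(n + 1 : ℕ) * involCard (n + 1)) =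
      √(n + 1) * involCard n / involCard (n + 1) := by
  rw [fpTotal_succ]
  push_cast
  rw [mul_div_mul_comm, Real.div_sqrt, mul_div_assoc]

theorem one_sub_inv_sqrt_add_one_le (n : ℕ) :
    1 - (√((n : ℝ) + 1) + 1)⁻¹ ≤ √(n + 1) * involCard n / involCard (n + 1) := by
  have hs : 0 ≤ √((n : ℝ) + 1) := Real.sqrt_nonneg _
  rw [le_div_iff₀ (mod_cast involCard_pos (n + 1))]
  calc (1 - (√((n : ℝ) + 1) + 1)⁻¹) * involCard (n + 1)
      ≤ (1 - (√((n : ℝ) + 1) + 1)⁻¹) * ((√(n + 1) + 1) * involCard n) := by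
        gcongr
        · exact sub_nonneg.2 (inv_le_one_of_one_le₀ (by linarith))
        · exact (involCard_succ_bounds n).2
    _ = √(n + 1) * involCard n := by field_simp; ring

theorem sqrt_mul_involCard_div_le_one (n : ℕ) :
    √((n : ℝ) + 1) * involCard n / involCard (n + 1) ≤ 1 :=
  (div_le_one (mod_cast involCard_pos (n + 1))).2 (involCard_succ_bounds n).1

theorem stmt7 :
    Filter.Tendsto (fun n : ℕ => (fpTotal n : ℝ) / (Real.sqrt n * involCard n))
      Filter.atTop (nhds 1) := by
  have hlow : Tendsto (fun n : ℕ => 1 - (√((n : ℝ) + 1) + 1)⁻¹) atTop (𝓝 1) := by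
    have hsqrt : Tendsto (fun n : ℕ => √((n : ℝ) + 1) + 1) atTop atTop :=
      tendsto_atTop_add_const_right _ 1 <| Real.tendsto_sqrt_atTop.comp <|
        tendsto_atTop_add_const_right _ 1 tendsto_natCast_atTop_atTop
    simpa using tendsto_const_nhds.sub hsqrt.inv_tendsto_atTop
  rw [← tendsto_add_atTop_iff_nat 1]
  simp only [fpTotal_succ_div]
  exact tendsto_of_tendsto_of_tendsto_of_le_of_le hlow tendsto_const_nhds
    one_sub_inv_sqrt_add_one_le sqrt_mul_involCard_div_le_one
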